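/- arXiv:2211.09618 — 4 statements merged into one kernel-verified Lean document; each statement's English description precedes it below -/
import Mathlib

section
/- Fix a natural number r and a real δ > 0, and let d be a natural number with d ≥ √(2·r·ln(2/δ)). For 0 ≤ i ≤ r with i ≡ r (mod 2) set α_i^{(r)} = binom(r, (r−i)/2)/2^r, and set α_i^{(r)} = 0 for all other i. Define the polynomial p_{r,d}(x) = α_0^{(r)} + Σ_{i=1}^{d} 2·α_i^{(r)}·T_i(x), where T_i is the i-th Chebyshev polynomial of the first kind. Then |p_{r,d}(x) − x^r| ≤ δ for all x ∈ [−1,1]. -/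
open Polynomial

/-- The Chebyshev coefficients of `x^r`: `α_i^{(r)} = binom(r, (r-i)/2) / 2^r` when
`0 ≤ i ≤ r` and `i ≡ r (mod 2)`, and `α_i^{(r)} = 0` otherwise. -/
noncomputable def chebCoeffAlpha (r i : ℕ) : ℝ :=
  if i ≤ r ∧ i % 2 = r % 2 then (r.choose ((r - i) / 2) : ℝ) / 2 ^ r else 0

/-- The degree-`d` Chebyshev truncation of `x^r`:
`p_{r,d}(x) = α_0^{(r)} + Σ_{i=1}^d 2 α_i^{(r)} T_i(x)`. -/
noncomputable def chebApprox (r d : ℕ) : Polynomial ℝ :=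
  Polynomial.C (chebCoeffAlpha r 0) +
    ∑ i ∈ Finset.Icc 1 d, Polynomial.C (2 * chebCoeffAlpha r i) * Polynomial.Chebyshev.T ℝ i

/-!
Put `x = cos θ`. Writing `cos θ = (e^{iθ} + e^{-iθ})/2` and expanding, `cos θ ^ r` is the mean of
`cos (S θ)` where `S` is a sum of `r` independent uniform signs; grouping the values of `S` by `|S|`
and using `T_i (cos θ) = cos (i θ)` gives `x ^ r = α_0 + Σ_{i ≥ 1} 2 α_i T_i x`. The truncation
`p_{r,d}` therefore errs by at most `P(|S| > d)`, and the Chernoff bound with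
`𝔼 e^{tS} = cosh t ^ r ≤ e^{r t² / 2}` at `t = d / r` gives `P(|S| > d) ≤ 2 e^{-d²/(2r)} ≤ δ`.
-/

open Finset Real

/-- `signSumMean r f` is the mean of `f (ε₁ + ⋯ + εᵣ)` over independent uniform signs `εⱼ = ±1`:
the sum equals `r - 2k` with probability `r.choose k / 2 ^ r`. -/
noncomputable def signSumMean (r : ℕ) (f : ℤ → ℝ) : ℝ :=
  ∑ k ∈ range (r + 1), (r.choose k : ℝ) / 2 ^ r * f (r - 2 * k)

section signSumMean

variable {r : ℕ} {f g : ℤ → ℝ}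

lemma signSumMean_mono (h : ∀ n, f n ≤ g n) : signSumMean r f ≤ signSumMean r g :=
  sum_le_sum fun _ _ => mul_le_mul_of_nonneg_left (h _) (by positivity)

lemma signSumMean_add : signSumMean r (fun n => f n + g n) = signSumMean r f + signSumMean r g := by
  simp only [signSumMean, mul_add, sum_add_distrib]

lemma signSumMean_const_mul (c : ℝ) : signSumMean r (fun n => c * f n) = c * signSumMean r f := by
  simp only [signSumMean, mul_sum, mul_left_comm]

lemma abs_signSumMean_sub_le :
    |signSumMean r f - signSumMean r g| ≤ signSumMean r (fun n => |f n - g n|) := by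
  rw [signSumMean, signSumMean, ← sum_sub_distrib]
  refine (abs_sum_le_sum_abs _ _).trans_eq (sum_congr rfl fun k _ => ?_)
  rw [← mul_sub, abs_mul, abs_of_nonneg (by positivity)]

end signSumMean

lemma sum_choose_mul_cexp (r : ℕ) (z : ℂ) :
    ∑ k ∈ range (r + 1), (r.choose k : ℂ) / 2 ^ r * Complex.exp (z * (r - 2 * k)) =
      Complex.cosh z ^ r := by
  rw [Complex.cosh, div_pow, add_comm (Complex.exp z), add_pow, sum_div]
  refine sum_congr rfl fun k hk => ?_
  have hk : k ≤ r := Nat.lt_succ_iff.mp (mem_range.mp hk)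
  rw [← Complex.exp_nat_mul, ← Complex.exp_nat_mul, ← Complex.exp_add, Nat.cast_sub hk]
  ring_nf

lemma signSumMean_exp (r : ℕ) (t : ℝ) :
    signSumMean r (fun n => exp (t * n)) = cosh t ^ r := by
  apply Complex.ofReal_injective
  push_cast [signSumMean]
  exact sum_choose_mul_cexp r t

lemma signSumMean_cos (r : ℕ) (θ : ℝ) :
    signSumMean r (fun n => cos (n * θ)) = cos θ ^ r := by
  have h := congrArg Complex.re (sum_choose_mul_cexp r (θ * Complex.I))
  rw [Complex.cosh_mul_I, ← Complex.ofReal_cos, ← Complex.ofReal_pow, Complex.ofReal_re,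
    Complex.re_sum] at h
  rw [← h, signSumMean]
  refine sum_congr rfl fun k _ => ?_
  rw [← Complex.exp_ofReal_mul_I_re]
  push_cast
  rw [← Complex.re_ofReal_mul]
  push_cast
  ring_nf

lemma filter_natAbs_sub_two_mul_eq (r i : ℕ) :
    (range (r + 1)).filter (fun k : ℕ => ((r : ℤ) - 2 * k).natAbs = i) =
      if i ≤ r ∧ i % 2 = r % 2 then {(r - i) / 2, (r + i) / 2} else ∅ := by
  ext k
  split_ifs <;> simp <;> omega

lemma sum_choose_filter_natAbs_eq (r i : ℕ) :
    ∑ k ∈ (range (r + 1)).filter (fun k : ℕ => ((r : ℤ) - 2 * k).natAbs = i),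
        (r.choose k : ℝ) / 2 ^ r = (if i = 0 then 1 else 2) * chebCoeffAlpha r i := by
  rw [filter_natAbs_sub_two_mul_eq, chebCoeffAlpha]
  split_ifs with hi hi0
  · subst hi0
    simp
  · rw [sum_pair (by omega), show (r + i) / 2 = r - (r - i) / 2 by omega,
      Nat.choose_symm (by omega)]
    ring
  · simp
  · simp

theorem signSumMean_comp_natAbs {r N : ℕ} (f : ℕ → ℝ) (hN : r ≤ N) :
    signSumMean r (fun n => f n.natAbs) =
      chebCoeffAlpha r 0 * f 0 + ∑ i ∈ Icc 1 N, 2 * chebCoeffAlpha r i * f i := by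
  have hmaps : ∀ k ∈ range (r + 1), ((r : ℤ) - 2 * k).natAbs ∈ insert 0 (Icc 1 N) := by
    intro k hk
    simp only [mem_range, mem_insert, mem_Icc] at hk ⊢
    omega
  have hfiber : ∀ i, ∑ k ∈ (range (r + 1)).filter (fun k : ℕ => ((r : ℤ) - 2 * k).natAbs = i),
      (r.choose k : ℝ) / 2 ^ r * f ((r : ℤ) - 2 * k).natAbs =
        (if i = 0 then 1 else 2) * chebCoeffAlpha r i * f i := by
    intro i
    rw [← sum_choose_filter_natAbs_eq, sum_mul]
    exact sum_congr rfl fun k hk => by rw [(mem_filter.mp hk).2]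
  rw [signSumMean, ← sum_fiberwise_of_maps_to hmaps, sum_insert (by simp)]
  simp only [hfiber, if_true, one_mul]
  congr 1
  exact sum_congr rfl fun i hi => by rw [if_neg (by simp at hi; omega)]

lemma cos_natAbs_mul (n : ℤ) (θ : ℝ) : cos (n.natAbs * θ) = cos (n * θ) := by
  rw [Nat.cast_natAbs, Int.cast_abs]
  rcases abs_choice (n : ℝ) with h | h <;> rw [h]
  rw [neg_mul, cos_neg]

lemma chebApprox_eval_cos (r d : ℕ) (θ : ℝ) :
    (chebApprox r d).eval (cos θ) =
      chebCoeffAlpha r 0 + ∑ i ∈ Icc 1 d, 2 * chebCoeffAlpha r i * cos (i * θ) := by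
  simp [chebApprox, eval_finsetSum]

lemma chebApprox_eval_cos_eq_signSumMean (r d : ℕ) (θ : ℝ) :
    (chebApprox r d).eval (cos θ) =
      signSumMean r (fun n => if n.natAbs ≤ d then cos (n * θ) else 0) := by
  have h := signSumMean_comp_natAbs (fun i => if i ≤ d then cos (i * θ) else 0) (le_max_left r d)
  simp only [cos_natAbs_mul] at h
  rw [h, chebApprox_eval_cos, if_pos (Nat.zero_le d)]
  simp only [mul_ite, mul_zero, ← sum_filter]
  rw [show (Icc 1 (max r d)).filter (· ≤ d) = Icc 1 d by ext; simp; omega]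
  simp

lemma signSumMean_tail_eq_zero {r d : ℕ} (h : r ≤ d) :
    signSumMean r (fun n => if d < n.natAbs then 1 else 0) = 0 :=
  sum_eq_zero fun k hk => by
    have : ¬d < ((r : ℤ) - 2 * k).natAbs := by simp at hk; omega
    simp [this]

lemma indicator_lt_natAbs_le (d : ℕ) {t : ℝ} (ht : 0 ≤ t) (n : ℤ) :
    (if d < n.natAbs then 1 else 0 : ℝ) ≤
      exp (-(t * d)) * exp (t * n) + exp (-(t * d)) * exp (-t * n) := by
  rw [← exp_add, ← exp_add]
  split_ifs with h
  · have : (d : ℝ) < n ∨ (d : ℝ) < -n := by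
      rw [← lt_abs, ← Int.cast_abs, ← Nat.cast_natAbs]
      exact_mod_cast h
    rcases this with hn | hn
    · linarith [one_le_exp (by nlinarith : 0 ≤ -(t * d) + t * n), exp_pos (-(t * d) + -t * n)]
    · linarith [one_le_exp (by nlinarith : 0 ≤ -(t * d) + -t * n), exp_pos (-(t * d) + t * n)]
  · positivity

lemma signSumMean_tail_le_exp_mul_cosh_pow (r d : ℕ) {t : ℝ} (ht : 0 ≤ t) :
    signSumMean r (fun n => if d < n.natAbs then 1 else 0) ≤ 2 * exp (-(t * d)) * cosh t ^ r :=
  calc _ ≤ signSumMean r (fun n => exp (-(t * d)) * exp (t * n) + exp (-(t * d)) * exp (-t * n)) :=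
        signSumMean_mono (indicator_lt_natAbs_le d ht)
    _ = 2 * exp (-(t * d)) * cosh t ^ r := by
        rw [signSumMean_add, signSumMean_const_mul, signSumMean_const_mul, signSumMean_exp,
          signSumMean_exp, cosh_neg]
        ring

lemma signSumMean_tail_le {r : ℕ} (hr : 0 < r) (d : ℕ) :
    signSumMean r (fun n => if d < n.natAbs then 1 else 0) ≤ 2 * exp (-(d ^ 2 / (2 * r))) := by
  have hr' : (0 : ℝ) < r := by exact_mod_cast hr
  have ht : (0 : ℝ) ≤ d / r := by positivity
  refine (signSumMean_tail_le_exp_mul_cosh_pow r d ht).trans ?_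
  calc 2 * exp (-(d / r * d)) * cosh (d / r) ^ r
      ≤ 2 * exp (-(d / r * d)) * exp ((d / r) ^ 2 / 2) ^ r := by
        gcongr
        exact cosh_le_exp_half_sq _
    _ = 2 * exp (-(d ^ 2 / (2 * r))) := by
        rw [mul_assoc, ← exp_nat_mul, ← exp_add]
        congr 2
        field_simp
        ring

lemma two_mul_exp_neg_sq_div_le {r d δ : ℝ} (hr : 0 < r) (hδ : 0 < δ)
    (hd : √(2 * r * log (2 / δ)) ≤ d) : 2 * exp (-(d ^ 2 / (2 * r))) ≤ δ := by
  have hlog : log (2 / δ) ≤ d ^ 2 / (2 * r) := by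
    rw [le_div_iff₀ (by positivity), mul_comm]
    exact (sqrt_le_iff.mp hd).2
  calc 2 * exp (-(d ^ 2 / (2 * r))) ≤ 2 * exp (-log (2 / δ)) := by gcongr
    _ = δ := by
      rw [exp_neg, exp_log (by positivity)]
      field_simp

lemma signSumMean_tail_le_of_sqrt_le {r d : ℕ} {δ : ℝ} (hδ : 0 < δ)
    (hd : √(2 * r * log (2 / δ)) ≤ d) :
    signSumMean r (fun n => if d < n.natAbs then 1 else 0) ≤ δ := by
  rcases le_or_gt r d with hrd | hdr
  · rw [signSumMean_tail_eq_zero hrd]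
    exact hδ.le
  · have hr : 0 < r := by omega
    exact (signSumMean_tail_le hr d).trans (two_mul_exp_neg_sq_div_le (by exact_mod_cast hr) hδ hd)

/-- For `δ > 0` and `d ≥ √(2 r ln(2/δ))`, the polynomial `p_{r,d}` satisfies
`|p_{r,d}(x) - x^r| ≤ δ` for all `x ∈ [-1,1]`. -/
theorem chebApprox_close_to_monomial
    (r : ℕ) (δ : ℝ) (hδ : 0 < δ) (d : ℕ)
    (hd : Real.sqrt (2 * r * Real.log (2 / δ)) ≤ (d : ℝ)) :
    ∀ x ∈ Set.Icc (-1 : ℝ) 1, |(chebApprox r d).eval x - x ^ r| ≤ δ := by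
  rintro x ⟨hx₁, hx₂⟩
  rw [← cos_arccos hx₁ hx₂]
  generalize arccos x = θ
  rw [chebApprox_eval_cos_eq_signSumMean, ← signSumMean_cos]
  calc _ ≤ signSumMean r (fun n => |(if n.natAbs ≤ d then cos (n * θ) else 0) - cos (n * θ)|) :=
        abs_signSumMean_sub_le
    _ ≤ signSumMean r (fun n => if d < n.natAbs then 1 else 0) :=
        signSumMean_mono fun n => by split_ifs <;> first | omega | simp [abs_cos_le_one]
    _ ≤ δ := signSumMean_tail_le_of_sqrt_le hδ hd
end

section
/- Let K be an abstract simplicial complex on vertex set {1,…,n} and let k ≥ 1 be such that K has at least one k-face. Then the largest eigenvalue of the k-th combinatorial Laplacian satisfies λ_max(Δ_k) ≥ δ_k + k + 1, where δ_k is the maximum up-degree over all k-faces of K. -/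
open Matrix

/-- An abstract simplicial complex on vertex set `Fin n`: a family of nonempty finite subsets
closed under taking nonempty subsets. -/
def IsSimplicialComplex {n : ℕ} (K : Finset (Finset (Fin n))) : Prop :=
  (∀ A ∈ K, A.Nonempty) ∧ ∀ A ∈ K, ∀ B ⊆ A, B.Nonempty → B ∈ K

/-- The faces of `K` of cardinality `c`; the `k`-faces are those of cardinality `k + 1`. -/
def FaceC {n : ℕ} (K : Finset (Finset (Fin n))) (c : ℕ) : Type :=
  {A : Finset (Fin n) // A ∈ K ∧ A.card = c}

instance {n : ℕ} (K : Finset (Finset (Fin n))) (c : ℕ) : Fintype (FaceC K c) := by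
  unfold FaceC; infer_instance

instance {n : ℕ} (K : Finset (Finset (Fin n))) (c : ℕ) : DecidableEq (FaceC K c) := by
  unfold FaceC; infer_instance

/-- The boundary operator `∂` as a matrix sending faces of cardinality `c + 1` to faces of
cardinality `c`: the face obtained by deleting the `ℓ`-th smallest vertex gets sign
`(-1)^(ℓ-1)`. -/
noncomputable def bdry {n : ℕ} (K : Finset (Finset (Fin n))) (c : ℕ) :
    Matrix (FaceC K c) (FaceC K (c + 1)) ℝ :=
  fun B A =>
    if B.1 ⊆ A.1 then
      ∑ v ∈ A.1 \ B.1, (-1 : ℝ) ^ (A.1.filter (fun u => u < v)).card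
    else 0

/-- The `k`-th combinatorial Laplacian `Δ_k = ∂_k^T ∂_k + ∂_{k+1} ∂_{k+1}^T`,
indexed by the `k`-faces (which have cardinality `k + 1`). -/
noncomputable def CombLaplacian {n : ℕ} (K : Finset (Finset (Fin n))) (k : ℕ) :
    Matrix (FaceC K (k + 1)) (FaceC K (k + 1)) ℝ :=
  (bdry K k)ᵀ * bdry K k + bdry K (k + 1) * (bdry K (k + 1))ᵀ

/-- The up-degree of a `k`-face `A`: the number of `(k+1)`-faces of `K` containing `A`. -/
def upDegree {n : ℕ} (K : Finset (Finset (Fin n))) (k : ℕ) (A : Finset (Fin n)) : ℕ :=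
  (K.filter fun B => A ⊆ B ∧ B.card = k + 2).card

/-- Two distinct `k`-faces are down-up neighbors if their symmetric difference has
cardinality `2`. -/
def DownUpNbr {n : ℕ} (A B : Finset (Fin n)) : Prop :=
  A ≠ B ∧ ((A \ B) ∪ (B \ A)).card = 2

/-- Down-up neighboring `k`-faces `A`, `B` are additionally up-down neighbors if `A ∪ B`
is a `(k+1)`-face of `K`. -/
def UpDownNbr {n : ℕ} (K : Finset (Finset (Fin n))) (k : ℕ) (A B : Finset (Fin n)) : Prop :=
  DownUpNbr A B ∧ (A ∪ B) ∈ K ∧ (A ∪ B).card = k + 2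

/-! Every nonzero entry of a boundary matrix is `±1`, so the diagonal entry of `Δ_k` at a
`k`-face `A` counts the `(k-1)`-faces below `A` (there are `k + 1` of them, as `K` is closed
under nonempty subsets and `k ≥ 1`) plus the `(k+1)`-faces above `A`, i.e. `d^up_A + k + 1`.
Since `λ_max • 1 - Δ_k` is positive semidefinite, every diagonal entry of `Δ_k` is at most
`λ_max`; taking `A` of maximal up-degree gives the bound. -/

open Finset

lemma Matrix.IsHermitian.diag_le_iSup_eigenvalues {ι : Type*} [Fintype ι] [DecidableEq ι]
    {M : Matrix ι ι ℝ} (hM : M.IsHermitian) (i : ι) :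
    M i i ≤ ⨆ j, hM.eigenvalues j := by
  open MatrixOrder in
  have hle : M ≤ algebraMap ℝ _ (⨆ j, hM.eigenvalues j) := by
    refine le_algebraMap_of_spectrum_le (fun x hx => ?_) hM
    obtain ⟨j, rfl⟩ := hM.spectrum_real_eq_range_eigenvalues ▸ hx
    exact le_ciSup (Set.finite_range _).bddAbove j
  simpa [algebraMap_eq_diagonal] using (le_iff.mp hle).diag_nonneg (i := i)

section Faces

variable {n : ℕ} {K : Finset (Finset (Fin n))}

lemma bdry_apply_sq {c : ℕ} (B : FaceC K c) (A : FaceC K (c + 1)) :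
    bdry K c B A ^ 2 = if B.1 ⊆ A.1 then 1 else 0 := by
  unfold bdry
  split_ifs with h
  · obtain ⟨v, hv⟩ : ∃ v, A.1 \ B.1 = {v} := card_eq_one.mp <| by
      rw [card_sdiff_of_subset h, A.2.2, B.2.2]; omega
    rw [hv, sum_singleton, ← pow_mul, mul_comm, pow_mul, neg_one_sq, one_pow]
  · exact zero_pow two_ne_zero

lemma transpose_bdry_mul_bdry_apply_self {c : ℕ} (A : FaceC K (c + 1)) :
    ((bdry K c)ᵀ * bdry K c) A A = #{B : FaceC K c | B.1 ⊆ A.1} := by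
  simp only [mul_apply, transpose_apply, ← sq, bdry_apply_sq, sum_boole]

lemma bdry_mul_transpose_bdry_apply_self {c : ℕ} (B : FaceC K c) :
    (bdry K c * (bdry K c)ᵀ) B B = #{A : FaceC K (c + 1) | B.1 ⊆ A.1} := by
  simp only [mul_apply, transpose_apply, ← sq, bdry_apply_sq, sum_boole]

lemma card_subfaces (hK : IsSimplicialComplex K) {c : ℕ} (hc : 1 ≤ c) (A : FaceC K (c + 1)) :
    #{B : FaceC K c | B.1 ⊆ A.1} = c + 1 := by
  calc #{B : FaceC K c | B.1 ⊆ A.1} = #(A.1.powersetCard c) := by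
        refine card_nbij (·.1) (fun B hB => ?_) Subtype.val_injective.injOn fun S hS => ?_
        · exact mem_powersetCard.mpr ⟨(mem_filter.mp hB).2, B.2.2⟩
        · obtain ⟨hSA, hS⟩ := mem_powersetCard.mp hS
          have hSne : S.Nonempty := card_pos.mp (by omega)
          exact ⟨⟨S, hK.2 A.1 A.2.1 S hSA hSne, hS⟩, mem_filter.mpr ⟨mem_univ _, hSA⟩, rfl⟩
    _ = c + 1 := by rw [card_powersetCard, A.2.2, Nat.choose_succ_self_right]

lemma card_superfaces (k : ℕ) (A : Finset (Fin n)) :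
    #{C : FaceC K (k + 2) | A ⊆ C.1} = upDegree K k A := by
  refine card_nbij (·.1) (fun C hC => ?_) Subtype.val_injective.injOn fun S hS => ?_
  · simpa [C.2.1, C.2.2] using hC
  · obtain ⟨hSK, hAS, hS⟩ := mem_filter.mp hS
    exact ⟨⟨S, hSK, hS⟩, mem_filter.mpr ⟨mem_univ _, hAS⟩, rfl⟩

lemma combLaplacian_apply_self (hK : IsSimplicialComplex K) {k : ℕ} (hk : 1 ≤ k)
    (A : FaceC K (k + 1)) :
    CombLaplacian K k A A = upDegree K k A.1 + k + 1 := by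
  rw [CombLaplacian, Matrix.add_apply, transpose_bdry_mul_bdry_apply_self, card_subfaces hK hk,
    bdry_mul_transpose_bdry_apply_self, card_superfaces]
  push_cast
  ring

end Faces

/-- For a simplicial complex `K` on `{1,…,n}` and `k ≥ 1` such that `K` has a `k`-face, the
largest eigenvalue of `Δ_k` satisfies `λ_max(Δ_k) ≥ δ_k + k + 1`, where `δ_k` is the maximum
up-degree over all `k`-faces. -/
theorem laplacian_lambdaMax_ge
    {n k : ℕ} (K : Finset (Finset (Fin n))) (hK : IsSimplicialComplex K)
    (hk : 1 ≤ k) (hne : Nonempty (FaceC K (k + 1)))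
    (hΔ : (CombLaplacian K k).IsHermitian) :
    ((Finset.univ.sup fun A : FaceC K (k + 1) => upDegree K k A.1 : ℕ) : ℝ) + k + 1 ≤
      ⨆ i, hΔ.eigenvalues i := by
  obtain ⟨A, -, hA⟩ := exists_mem_eq_sup univ (univ_nonempty_iff.mpr hne)
    fun A : FaceC K (k + 1) => upDegree K k A.1
  calc ((univ.sup fun A : FaceC K (k + 1) => upDegree K k A.1 : ℕ) : ℝ) + k + 1
      = CombLaplacian K k A A := by rw [hA, combLaplacian_apply_self hK hk]
    _ ≤ ⨆ i, hΔ.eigenvalues i := hΔ.diag_le_iSup_eigenvalues A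
end

section
/- Let G be a finite simple graph on vertex set {1,…,n}, let K be the clique complex of G, let k ≥ 1 be such that K has at least one k-face, and let Δ_k be the k-th combinatorial Laplacian of K. Then for every k-face A, the number of k-faces B (including B = A) with (Δ_k)_{AB} ≠ 0 is at most n − k − d^up_A, where d^up_A is the up-degree of A. -/
open Matrix

/-- The `k`-th combinatorial Laplacian `Δ_k = ∂_k^T ∂_k + ∂_{k+1} ∂_{k+1}^T`,
indexed by the `k`-faces (which have cardinality `k + 1`). -/
noncomputable def combLaplacian {n : ℕ} (K : Finset (Finset (Fin n))) (k : ℕ) :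
    Matrix (FaceC K (k + 1)) (FaceC K (k + 1)) ℝ :=
  (bdry K k)ᵀ * bdry K k + bdry K (k + 1) * (bdry K (k + 1))ᵀ

/-- The clique complex of a finite simple graph `G` on `{1,…,n}`: the family of nonempty
cliques of `G`. -/
noncomputable def cliqueComplex {n : ℕ} (G : SimpleGraph (Fin n)) : Finset (Finset (Fin n)) :=
  @Finset.filter _ (fun A => A.Nonempty ∧ G.IsClique (A : Set (Fin n)))
    (Classical.decPred _) Finset.univ

/-!
A nonzero off-diagonal entry `(Δ_k)_{AB}` forces `|A ∩ B| = k`; as `k ≥ 1`, `A ∩ B` is then a face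
of the clique complex, and if `A ∪ B` were a face too the down and up terms would cancel. Hence
`B = (A \ {a}) ∪ {b}` with `b ∉ A` and `A ∪ {b}` not a clique, which makes `a` the only
non-neighbour of `b` in `A`: `B` is determined by `b`. Of the `n - (k + 1)` vertices outside `A`,
exactly `d^up_A` extend `A` to a face, so at most `n - (k + 1) - d^up_A` choices of `b` remain,
plus the diagonal entry.
-/

open Finset

lemma Finset.card_filter_lt_insert {α : Type*} [LinearOrder α] {s : Finset α} {a b : α}
    (hb : b ∉ s) :
    #((insert b s).filter (· < a)) = #(s.filter (· < a)) + if b < a then 1 else 0 := by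
  rw [filter_insert]
  split_ifs with hba
  · exact card_insert_of_notMem fun h => hb (mem_of_mem_filter b h)
  · rfl

lemma Finset.exists_eq_insert_inter_of_card_inter {α : Type*} [DecidableEq α] {s t : Finset α}
    {k : ℕ} (hs : #s = k + 1) (hst : #(s ∩ t) = k) : ∃ a ∉ t, s = insert a (s ∩ t) := by
  have hsdiff : #(s \ t) = 1 := by
    have := card_sdiff_add_card_inter s t
    omega
  obtain ⟨a, ha⟩ := card_eq_one.1 hsdiff
  refine ⟨a, (mem_sdiff.1 (ha ▸ mem_singleton_self a)).2, ?_⟩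
  rw [insert_eq, ← ha, sdiff_union_inter]

lemma Finset.union_eq_insert_of_eq_insert_inter {α : Type*} [DecidableEq α] {s t : Finset α}
    {b : α} (ht : t = insert b (s ∩ t)) : s ∪ t = insert b s := by
  rw [ht, union_insert, union_eq_left.2 inter_subset_left]

lemma SimpleGraph.filter_adj_insert_eq_of_not_isClique {V : Type*} [DecidableEq V]
    {G : SimpleGraph V} [DecidableRel G.Adj] {s : Finset V} {a b : V} (hb : b ∉ s)
    (has : G.IsClique (↑(insert a s) : Set V)) (hbs : G.IsClique (↑(insert b s) : Set V))
    (habs : ¬ G.IsClique (↑(insert b (insert a s)) : Set V)) :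
    (insert a s).filter (G.Adj b) = s := by
  have hadj : ∀ x ∈ s, G.Adj b x := fun x hx =>
    (isClique_insert.1 (coe_insert b s ▸ hbs)).2 x hx (ne_of_mem_of_not_mem hx hb).symm
  have hba : ¬ G.Adj b a := by
    intro hba
    refine habs (coe_insert b _ ▸ isClique_insert.2 ⟨has, fun x hx _ => ?_⟩)
    rcases mem_insert.1 hx with rfl | hx
    · exact hba
    · exact hadj x hx
  rw [filter_insert, if_neg hba, filter_true_of_mem hadj]

section Boundary

variable {n : ℕ} {K : Finset (Finset (Fin n))}

lemma bdry_apply_of_not_subset {c : ℕ} {C : FaceC K c} {A : FaceC K (c + 1)}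
    (h : ¬ C.1 ⊆ A.1) : bdry K c C A = 0 :=
  if_neg h

lemma bdry_apply_of_eq_insert {c : ℕ} {C : FaceC K c} {A : FaceC K (c + 1)} {v : Fin n}
    (hv : v ∉ C.1) (hA : A.1 = insert v C.1) :
    bdry K c C A = (-1) ^ #(C.1.filter (· < v)) := by
  have hsdiff : A.1 \ C.1 = {v} := by
    rw [hA, insert_sdiff_of_notMem _ hv, sdiff_self, bot_eq_empty, insert_empty]
  rw [bdry, if_pos (hA ▸ subset_insert v C.1), hsdiff, sum_singleton, hA, filter_insert,
    if_neg (lt_irrefl v)]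

lemma transpose_bdry_mul_bdry_apply_eq_sum {c : ℕ} (A B : FaceC K (c + 1)) :
    ((bdry K c)ᵀ * bdry K c) A B = ∑ C with C.1 ⊆ A.1 ∩ B.1, bdry K c C A * bdry K c C B := by
  rw [Matrix.mul_apply, sum_filter]
  refine sum_congr rfl fun C _ => ?_
  rw [Matrix.transpose_apply]
  split_ifs with h
  · rfl
  · rcases not_and_or.1 (subset_inter_iff.not.1 h) with hA | hB
    · rw [bdry_apply_of_not_subset hA, zero_mul]
    · rw [bdry_apply_of_not_subset hB, mul_zero]

lemma bdry_mul_transpose_bdry_apply_eq_sum {c : ℕ} (A B : FaceC K (c + 1)) :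
    (bdry K (c + 1) * (bdry K (c + 1))ᵀ) A B =
      ∑ D with A.1 ∪ B.1 ⊆ D.1, bdry K (c + 1) A D * bdry K (c + 1) B D := by
  rw [Matrix.mul_apply, sum_filter]
  refine sum_congr rfl fun D _ => ?_
  rw [Matrix.transpose_apply]
  split_ifs with h
  · rfl
  · rcases not_and_or.1 (union_subset_iff.not.1 h) with hA | hB
    · rw [bdry_apply_of_not_subset hA, zero_mul]
    · rw [bdry_apply_of_not_subset hB, mul_zero]

lemma transpose_bdry_mul_bdry_apply {c : ℕ} {A B : FaceC K (c + 1)} {C : FaceC K c}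
    (hC : C.1 = A.1 ∩ B.1) :
    ((bdry K c)ᵀ * bdry K c) A B = bdry K c C A * bdry K c C B := by
  rw [transpose_bdry_mul_bdry_apply_eq_sum,
    sum_eq_single_of_mem C (mem_filter.2 ⟨mem_univ C, hC.le⟩)]
  intro C' hC' hne
  refine absurd (Subtype.ext ?_) hne
  exact eq_of_subset_of_card_le (hC ▸ (mem_filter.1 hC').2) (by rw [C.2.2, C'.2.2])

lemma bdry_mul_transpose_bdry_apply {c : ℕ} {A B : FaceC K (c + 1)} {D : FaceC K (c + 2)}
    (hD : D.1 = A.1 ∪ B.1) :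
    (bdry K (c + 1) * (bdry K (c + 1))ᵀ) A B = bdry K (c + 1) A D * bdry K (c + 1) B D := by
  rw [bdry_mul_transpose_bdry_apply_eq_sum,
    sum_eq_single_of_mem D (mem_filter.2 ⟨mem_univ D, hD.ge⟩)]
  intro D' hD' hne
  refine absurd (Subtype.ext ?_) hne
  exact (eq_of_subset_of_card_le (hD ▸ (mem_filter.1 hD').2) (by rw [D.2.2, D'.2.2])).symm

end Boundary

section Laplacian

variable {n k : ℕ} {K : Finset (Finset (Fin n))}

lemma le_card_inter_of_combLaplacian_apply_ne_zero {A B : FaceC K (k + 1)}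
    (h : combLaplacian K k A B ≠ 0) : k ≤ #(A.1 ∩ B.1) := by
  rw [combLaplacian, Matrix.add_apply, transpose_bdry_mul_bdry_apply_eq_sum,
    bdry_mul_transpose_bdry_apply_eq_sum] at h
  by_cases hdown : ∑ C with C.1 ⊆ A.1 ∩ B.1, bdry K k C A * bdry K k C B = 0
  · rw [hdown, zero_add] at h
    obtain ⟨D, hD, -⟩ := exists_ne_zero_of_sum_ne_zero h
    have hunion := card_le_card (mem_filter.1 hD).2
    have hcard := card_union_add_card_inter A.1 B.1
    rw [D.2.2] at hunion
    rw [A.2.2, B.2.2] at hcard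
    omega
  · obtain ⟨C, hC, -⟩ := exists_ne_zero_of_sum_ne_zero hdown
    have hinter := card_le_card (mem_filter.1 hC).2
    rwa [C.2.2] at hinter

/-- The orientations of `A` and `B` induced from `A ∩ B` agree exactly when those induced from
`A ∪ B` disagree, so the two terms of `Δ_k` cancel. -/
lemma combLaplacian_apply_eq_zero_of_inter_mem_of_union_mem {A B : FaceC K (k + 1)}
    (hcard : #(A.1 ∩ B.1) = k) (hinter : A.1 ∩ B.1 ∈ K) (hunion : A.1 ∪ B.1 ∈ K) :
    combLaplacian K k A B = 0 := by
  obtain ⟨a, haB, hA⟩ := exists_eq_insert_inter_of_card_inter A.2.2 hcard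
  obtain ⟨b, hbA, hB⟩ := exists_eq_insert_inter_of_card_inter B.2.2 (inter_comm B.1 A.1 ▸ hcard)
  rw [inter_comm] at hB
  have hAb : A.1 ∪ B.1 = insert b A.1 := union_eq_insert_of_eq_insert_inter hB
  have hBa : A.1 ∪ B.1 = insert a B.1 :=
    union_comm A.1 B.1 ▸ union_eq_insert_of_eq_insert_inter (inter_comm A.1 B.1 ▸ hA)
  set C := A.1 ∩ B.1
  have hab : a ≠ b := by
    rintro rfl
    exact hbA (hA ▸ mem_insert_self a C)
  let Cf : FaceC K k := ⟨C, hinter, hcard⟩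
  let Df : FaceC K (k + 2) := ⟨A.1 ∪ B.1, hunion, by rw [hAb, card_insert_of_notMem hbA, A.2.2]⟩
  rw [combLaplacian, Matrix.add_apply, transpose_bdry_mul_bdry_apply (C := Cf) rfl,
    bdry_mul_transpose_bdry_apply (D := Df) rfl,
    bdry_apply_of_eq_insert (fun h => haB (mem_inter.1 h).2) hA,
    bdry_apply_of_eq_insert (fun h => hbA (mem_inter.1 h).1) hB,
    bdry_apply_of_eq_insert hbA hAb, bdry_apply_of_eq_insert haB hBa, hA, hB,
    card_filter_lt_insert (fun h => haB (mem_inter.1 h).2),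
    card_filter_lt_insert (fun h => hbA (mem_inter.1 h).1)]
  rcases hab.lt_or_gt with h | h
  · rw [if_pos h, if_neg h.not_gt]
    ring
  · rw [if_neg h.not_gt, if_pos h]
    ring

end Laplacian

section CliqueComplex

variable {n k : ℕ} {G : SimpleGraph (Fin n)}

lemma mem_cliqueComplex {A : Finset (Fin n)} :
    A ∈ cliqueComplex G ↔ A.Nonempty ∧ G.IsClique (A : Set (Fin n)) := by
  simp [cliqueComplex]

lemma exists_eq_insert_filter_adj_of_combLaplacian_apply_ne_zero [DecidableRel G.Adj]
    (hk : 1 ≤ k) {A B : FaceC (cliqueComplex G) (k + 1)} (hAB : A ≠ B)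
    (h : combLaplacian (cliqueComplex G) k A B ≠ 0) :
    ∃ b ∉ A.1, insert b A.1 ∉ cliqueComplex G ∧ B.1 = insert b (A.1.filter (G.Adj b)) := by
  have hcard : #(A.1 ∩ B.1) = k := by
    refine le_antisymm (not_lt.1 fun hlt => hAB (Subtype.ext ?_))
      (le_card_inter_of_combLaplacian_apply_ne_zero h)
    have hsub : A.1 ⊆ B.1 := inter_eq_left.1 <|
      eq_of_subset_of_card_le (inter_subset_left : A.1 ∩ B.1 ⊆ A.1) (by rw [A.2.2]; omega)
    exact eq_of_subset_of_card_le hsub (by rw [A.2.2, B.2.2])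
  obtain ⟨a, haB, hA⟩ := exists_eq_insert_inter_of_card_inter A.2.2 hcard
  obtain ⟨b, hbA, hB⟩ := exists_eq_insert_inter_of_card_inter B.2.2 (inter_comm B.1 A.1 ▸ hcard)
  rw [inter_comm] at hB
  have hinter : A.1 ∩ B.1 ∈ cliqueComplex G := by
    refine mem_cliqueComplex.2 ⟨card_pos.1 (by omega), ?_⟩
    exact (mem_cliqueComplex.1 A.2.1).2.subset (coe_subset.2 inter_subset_left)
  have hunion : insert b A.1 ∉ cliqueComplex G := fun hmem => h <|
    combLaplacian_apply_eq_zero_of_inter_mem_of_union_mem hcard hinter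
      (union_eq_insert_of_eq_insert_inter hB ▸ hmem)
  refine ⟨b, hbA, hunion, ?_⟩
  set C := A.1 ∩ B.1
  have hfilter : (insert a C).filter (G.Adj b) = C := by
    refine SimpleGraph.filter_adj_insert_eq_of_not_isClique (fun h => hbA (mem_inter.1 h).1)
      (hA ▸ (mem_cliqueComplex.1 A.2.1).2) (hB ▸ (mem_cliqueComplex.1 B.2.1).2) fun hcl => ?_
    exact hunion (mem_cliqueComplex.2 ⟨insert_nonempty b _, hA ▸ hcl⟩)
  rw [← hA] at hfilter
  rw [hfilter, ← hB]

end CliqueComplex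

lemma upDegree_eq_card_filter_insert_mem {n k : ℕ} {K : Finset (Finset (Fin n))}
    {A : Finset (Fin n)} (hA : #A = k + 1) :
    upDegree K k A = #((univ \ A).filter (insert · A ∈ K)) := by
  symm
  refine card_bij (fun b _ => insert b A) (fun b hb => ?_) (fun b hb b' _ hbb' => ?_) ?_
  · obtain ⟨hbA, hK⟩ := mem_filter.1 hb
    exact mem_filter.2
      ⟨hK, subset_insert b A, by rw [card_insert_of_notMem (mem_sdiff.1 hbA).2, hA]⟩
  · exact (insert_inj (mem_sdiff.1 (mem_filter.1 hb).1).2).1 hbb'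
  · intro B hB
    obtain ⟨hK, hAB, hB⟩ := mem_filter.1 hB
    obtain ⟨b, hbA, rfl⟩ := exists_eq_insert_iff.2 ⟨hAB, by omega⟩
    exact ⟨b, mem_filter.2 ⟨mem_sdiff.2 ⟨mem_univ b, hbA⟩, hK⟩, rfl⟩

lemma upDegree_add_card_filter_insert_notMem {n k : ℕ} {K : Finset (Finset (Fin n))}
    {A : Finset (Fin n)} (hA : #A = k + 1) :
    upDegree K k A + #((univ \ A).filter (insert · A ∉ K)) + (k + 1) = n := by
  rw [upDegree_eq_card_filter_insert_mem hA, card_filter_add_card_filter_not, ← hA,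
    card_sdiff_add_card_eq_card (subset_univ A), card_univ, Fintype.card_fin]

lemma ncard_combLaplacian_row_ne_zero_le {n k : ℕ} {G : SimpleGraph (Fin n)} (hk : 1 ≤ k)
    (A : FaceC (cliqueComplex G) (k + 1)) :
    {B | combLaplacian (cliqueComplex G) k A B ≠ 0}.ncard ≤
      #((univ \ A.1).filter (insert · A.1 ∉ cliqueComplex G)) + 1 := by
  classical
  set T := (univ \ A.1).filter (insert · A.1 ∉ cliqueComplex G)
  have hsupp : ∀ B ∈ {B | combLaplacian (cliqueComplex G) k A B ≠ 0},
      B.1 ∈ insert A.1 (T.image fun b => insert b (A.1.filter (G.Adj b))) := by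
    intro B hB
    rcases eq_or_ne A B with rfl | hAB
    · exact mem_insert_self _ _
    obtain ⟨b, hbA, hbK, hB⟩ :=
      exists_eq_insert_filter_adj_of_combLaplacian_apply_ne_zero hk hAB hB
    exact mem_insert_of_mem
      (mem_image.2 ⟨b, mem_filter.2 ⟨mem_sdiff.2 ⟨mem_univ b, hbA⟩, hbK⟩, hB.symm⟩)
  calc _ ≤ #(insert A.1 (T.image fun b => insert b (A.1.filter (G.Adj b)))) := by
        rw [← Set.ncard_coe_finset]
        exact Set.ncard_le_ncard_of_injOn Subtype.val hsupp Subtype.val_injective.injOn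
    _ ≤ #T + 1 := (card_insert_le _ _).trans (Nat.succ_le_succ card_image_le)

theorem clique_laplacian_row_nonzero_count_general
    {n k : ℕ} (G : SimpleGraph (Fin n)) (hk : 1 ≤ k)
    (A : FaceC (cliqueComplex G) (k + 1)) :
    {B : FaceC (cliqueComplex G) (k + 1) | combLaplacian (cliqueComplex G) k A B ≠ 0}.ncard ≤
      n - k - upDegree (cliqueComplex G) k A.1 := by
  have hrow := ncard_combLaplacian_row_ne_zero_le hk A
  have hsplit := upDegree_add_card_filter_insert_notMem (K := cliqueComplex G) A.2.2
  omega

/-- For the clique complex `K` of a graph `G` on `{1,…,n}` and `k ≥ 1` such that `K` has a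
`k`-face, every row of the `k`-th combinatorial Laplacian indexed by a `k`-face `A` has at most
`n - k - d^up_A` nonzero entries (diagonal included). -/
theorem clique_laplacian_row_nonzero_count
    {n k : ℕ} (G : SimpleGraph (Fin n)) (hk : 1 ≤ k)
    (hne : Nonempty (FaceC (cliqueComplex G) (k + 1)))
    (A : FaceC (cliqueComplex G) (k + 1)) :
    {B : FaceC (cliqueComplex G) (k + 1) | combLaplacian (cliqueComplex G) k A B ≠ 0}.ncard ≤
      n - k - upDegree (cliqueComplex G) k A.1 :=
  clique_laplacian_row_nonzero_count_general G hk A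
end

section
/- Let H be a d×d real matrix (d ≥ 1) such that every column of H is nonzero, and let z be a natural number. Define the transition probability P(i,j) = |H_{ji}| / ‖H_{·,i}‖_1 for i, j ∈ {1,…,d}, where ‖H_{·,i}‖_1 = Σ_m |H_{mi}| is the absolute sum of column i, and for a path (j_0, j_1, …, j_z) in {1,…,d} define Y_z(j_0,…,j_z) = [j_0 = j_z] · ∏_{ℓ=0}^{z−1} sgn(H_{j_{ℓ+1}, j_ℓ}) · ‖H_{·,j_ℓ}‖_1, where [j_0 = j_z] is 1 if j_0 = j_z and 0 otherwise, and sgn(t) ∈ {−1, 0, 1} is the sign of t. Then (1/d) · Σ_{j_0, j_1, …, j_z ∈ {1,…,d}} Y_z(j_0,…,j_z) · ∏_{ℓ=0}^{z−1} P(j_ℓ, j_{ℓ+1}) = Tr(H^z)/d; that is, the expectation of Y_z over a uniformly random start j_0 followed by z steps of the Markov chain with transition probabilities P equals the normalized trace of H^z. -/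
open Matrix

lemma aux_pow {d : ℕ} (H : Matrix (Fin d) (Fin d) ℝ) :
    ∀ (z : ℕ) (a b : Fin d),
      ∑ j : Fin (z + 1) → Fin d,
        (if j 0 = a ∧ j (Fin.last z) = b then (1 : ℝ) else 0) *
          ∏ ℓ : Fin z, H (j ℓ.succ) (j ℓ.castSucc) = (H ^ z) b a := by
  intro z
  induction z with
  | zero =>
      intro a b
      rw [Fintype.sum_equiv (Equiv.funUnique (Fin 1) (Fin d)) _
        (fun x : Fin d => (if x = a ∧ x = b then (1:ℝ) else 0)) (fun j => by simp [Fin.last])]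
      by_cases hab : a = b
      · subst hab; simp [Matrix.one_apply]
      · rw [Finset.sum_eq_zero, pow_zero, Matrix.one_apply_ne (Ne.symm hab)]
        intro x _
        simp only [ite_eq_right_iff, and_imp]
        rintro rfl rfl; exact absurd rfl hab
  | succ z ih =>
      intro a b
      rw [← Fintype.sum_equiv (Fin.snocEquiv (fun _ => Fin d)) _ _ (fun _ => rfl)]
      rw [Fintype.sum_prod_type]
      simp only [Fin.snocEquiv_apply, Fin.prod_univ_castSucc, Fin.succ_castSucc,
        Fin.snoc_castSucc, Fin.snoc_last, Fin.succ_last]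
      have h0 : ∀ (y : Fin (z + 1) → Fin d) (x : Fin d), Fin.snoc (α := fun _ => Fin d) y x 0 = y 0 := by
        intro y x
        have := Fin.snoc_castSucc (α := fun _ : Fin (z + 2) => Fin d) x y 0
        simpa using this
      rw [Finset.sum_comm]
      have step : ∀ y : Fin (z + 1) → Fin d,
          ∑ x : Fin d, (if Fin.snoc (α := fun _ => Fin d) y x 0 = a ∧ x = b then (1:ℝ) else 0) *
            ((∏ ℓ : Fin z, H (y ℓ.succ) (y ℓ.castSucc)) * H x (y (Fin.last z))) =
          ∑ c : Fin d, ((if y 0 = a ∧ y (Fin.last z) = c then (1:ℝ) else 0) *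
            ∏ ℓ : Fin z, H (y ℓ.succ) (y ℓ.castSucc)) * H b c := by
        intro y
        rw [Finset.sum_eq_single b, Finset.sum_eq_single (y (Fin.last z))]
        · simp [h0, mul_assoc]
        · intro c _ hc; simp [hc, Ne.symm hc]
        · intro hmem; exact absurd (Finset.mem_univ _) hmem
        · intro x _ hx; simp [hx]
        · intro hmem; exact absurd (Finset.mem_univ _) hmem
      rw [Finset.sum_congr rfl fun y _ => step y, Finset.sum_comm]
      simp only [← Finset.sum_mul, ih]
      rw [pow_succ']
      rw [Matrix.mul_apply]
      exact Finset.sum_congr rfl fun c _ => mul_comm _ _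


/-- Let `H` be a `d×d` real matrix (`d ≥ 1`) all of whose columns are nonzero, and let
`z : ℕ`. For a path `(j_0, …, j_z)` define
`Y_z(j_0,…,j_z) = [j_0 = j_z] · ∏_{ℓ<z} sgn(H_{j_{ℓ+1} j_ℓ}) · ‖H_{·,j_ℓ}‖_1`,
and transition probabilities `P(i,j) = |H_{ji}| / ‖H_{·,i}‖_1` where
`‖H_{·,i}‖_1 = Σ_m |H_{m i}|`. Then the expectation of `Y_z` over a uniformly random start
followed by `z` steps of the Markov chain with transitions `P` equals `Tr(H^z)/d`. -/
theorem path_integral_estimator_unbiased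
    {d : ℕ} (hd : 1 ≤ d) (H : Matrix (Fin d) (Fin d) ℝ)
    (hcol : ∀ i, ∃ m, H m i ≠ 0) (z : ℕ) :
    (1 / d : ℝ) *
        ∑ j : Fin (z + 1) → Fin d,
          ((if j 0 = j (Fin.last z) then (1 : ℝ) else 0) *
              ∏ ℓ : Fin z,
                Real.sign (H (j ℓ.succ) (j ℓ.castSucc)) * ∑ m, |H m (j ℓ.castSucc)|) *
            ∏ ℓ : Fin z, |H (j ℓ.succ) (j ℓ.castSucc)| / ∑ m, |H m (j ℓ.castSucc)| =
      (H ^ z).trace / d := by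
  have hS : ∀ i : Fin d, (∑ m, |H m i|) ≠ 0 := by
    intro i
    obtain ⟨m, hm⟩ := hcol i
    have : (0 : ℝ) < ∑ m, |H m i| :=
      Finset.sum_pos' (fun n _ => abs_nonneg _) ⟨m, Finset.mem_univ m, abs_pos.mpr hm⟩
    exact ne_of_gt this
  have sma : ∀ t : ℝ, Real.sign t * |t| = t := by
    intro t
    rcases lt_trichotomy t 0 with h | h | h
    · rw [Real.sign_of_neg h, abs_of_neg h]; ring
    · simp [h]
    · rw [Real.sign_of_pos h, abs_of_pos h]; ring
  have key : ∀ j : Fin (z + 1) → Fin d,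
      ((if j 0 = j (Fin.last z) then (1 : ℝ) else 0) *
          ∏ ℓ : Fin z,
            Real.sign (H (j ℓ.succ) (j ℓ.castSucc)) * ∑ m, |H m (j ℓ.castSucc)|) *
        ∏ ℓ : Fin z, |H (j ℓ.succ) (j ℓ.castSucc)| / ∑ m, |H m (j ℓ.castSucc)| =
      (if j 0 = j (Fin.last z) then (1 : ℝ) else 0) *
        ∏ ℓ : Fin z, H (j ℓ.succ) (j ℓ.castSucc) := by
    intro j
    rw [mul_assoc, ← Finset.prod_mul_distrib]
    congr 1
    refine Finset.prod_congr rfl fun ℓ _ => ?_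
    rw [mul_assoc, mul_div_cancel₀ _ (hS _) , sma _]
  rw [Finset.sum_congr rfl fun j _ => key j]
  have htr : ∑ j : Fin (z + 1) → Fin d,
      (if j 0 = j (Fin.last z) then (1 : ℝ) else 0) *
        ∏ ℓ : Fin z, H (j ℓ.succ) (j ℓ.castSucc) = (H ^ z).trace := by
    rw [Matrix.trace]
    simp only [Matrix.diag]
    rw [Finset.sum_congr rfl fun a (_ : a ∈ Finset.univ) => (aux_pow H z a a).symm,
      Finset.sum_comm]
    refine Finset.sum_congr rfl fun j _ => ?_
    rw [Finset.sum_eq_single (j 0)]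
    · simp [eq_comm]
    · intro a _ ha; simp [Ne.symm ha]
    · intro hmem; exact absurd (Finset.mem_univ _) hmem
  rw [htr, one_div, inv_mul_eq_div]
end
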